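/- arXiv:1611.05402 — 5 statements merged into one kernel-verified Lean document; each statement's English description precedes it below -/
import Mathlib

section
/- Let Q(a) be an unbiased random quantization of a ∈ ℝⁿ with independent coordinates. Then the naive gradient estimator ĝ = Q(a)(Q(a)ᵀx − b) satisfies E[ĝ] = a(aᵀx − b) + D x, where D is the diagonal matrix with entries Dᵢᵢ = E[Q(a)ᵢ²] − aᵢ². In particular, if some coordinate has positive quantization variance and the corresponding coordinate of x is nonzero, the estimator is biased. -/
open Finset

lemma sum_pi_prod {n : ℕ} {Ω : Fin n → Type} [∀ i, Fintype (Ω i)] (g : ∀ i, Ω i → ℝ) :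
    ∑ ω : (∀ j, Ω j), ∏ j, g j (ω j) = ∏ j, ∑ ω, g j ω := (Fintype.prod_sum g).symm

lemma prod_two_aux {n : ℕ} (i j : Fin n) (h : i ≠ j) (f : Fin n → ℝ)
    (hf : ∀ k, k ≠ i → k ≠ j → f k = 1) : ∏ k, f k = f i * f j := by
  rw [← Finset.mul_prod_erase Finset.univ f (Finset.mem_univ i),
      ← Finset.mul_prod_erase _ f (Finset.mem_erase.2 ⟨h.symm, Finset.mem_univ j⟩),
      Finset.prod_eq_one, mul_one]
  intro k hk
  simp only [Finset.mem_erase, Finset.mem_univ, and_true] at hk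
  exact hf k hk.2 hk.1

set_option maxHeartbeats 2000000 in
/-- Naive single-sample quantization is biased: if `Q` has independent
coordinates with `E[Q] = a`, then `E[Q(Qᵀx − b)] = a(aᵀx − b) + Dx` where
`Dᵢᵢ = E[Qᵢ²] − aᵢ²`; in particular if some coordinate has positive
quantization variance and the corresponding coordinate of `x` is nonzero,
the estimator is biased. -/
theorem stmt3 {n : ℕ} {Ω : Fin n → Type} [∀ i, Fintype (Ω i)]
    (p : ∀ i, Ω i → ℝ)
    (hp : ∀ i ω, 0 ≤ p i ω) (hs : ∀ i, ∑ ω, p i ω = 1)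
    (Q : ∀ i, Ω i → ℝ) (a x : Fin n → ℝ) (b : ℝ)
    (hQ : ∀ i, ∑ ω, p i ω * Q i ω = a i)
    (D : Fin n → ℝ)
    (hD : ∀ i, D i = (∑ ω, p i ω * (Q i ω) ^ 2) - (a i) ^ 2) :
    (∀ i, ∑ ω : (∀ j, Ω j), (∏ j, p j (ω j)) *
        (Q i (ω i) * ((∑ j, Q j (ω j) * x j) - b))
      = a i * ((∑ j, a j * x j) - b) + D i * x i) ∧
    ((∃ i, 0 < D i ∧ x i ≠ 0) →
      ∃ i, ∑ ω : (∀ j, Ω j), (∏ j, p j (ω j)) *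
          (Q i (ω i) * ((∑ j, Q j (ω j) * x j) - b))
        ≠ a i * ((∑ j, a j * x j) - b)) := by
  have T1 : ∀ i, (∑ ω : ∀ j, Ω j, (∏ j, p j (ω j)) * Q i (ω i)) = a i := by
    intro i
    calc ∑ ω : ∀ j, Ω j, (∏ j, p j (ω j)) * Q i (ω i)
        = ∑ ω : ∀ j, Ω j, ∏ k, (p k (ω k) * (if k = i then Q k (ω k) else 1)) := by
          refine Finset.sum_congr rfl fun ω _ => ?_
          rw [Finset.prod_mul_distrib, Finset.prod_ite_eq']
          simp
      _ = ∏ k, ∑ ω, (p k ω * (if k = i then Q k ω else 1)) :=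
          sum_pi_prod (fun k ω => p k ω * (if k = i then Q k ω else 1))
      _ = a i := by
          have h : ∀ k, (∑ ω, p k ω * (if k = i then Q k ω else 1))
              = if k = i then a k else 1 := by
            intro k; by_cases h : k = i <;> simp [h, hQ, hs]
          rw [Finset.prod_congr rfl (fun k _ => h k), Finset.prod_ite_eq']
          simp
  have T2 : ∀ i j, (∑ ω : ∀ j, Ω j, (∏ k, p k (ω k)) * (Q i (ω i) * Q j (ω j)))
      = a i * a j + (if i = j then D i else 0) := by
    intro i j
    rcases eq_or_ne i j with rfl | hij
    · calc ∑ ω : ∀ j, Ω j, (∏ k, p k (ω k)) * (Q i (ω i) * Q i (ω i))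
          = ∑ ω : ∀ j, Ω j, ∏ k, (p k (ω k) * (if k = i then Q k (ω k) ^ 2 else 1)) := by
            refine Finset.sum_congr rfl fun ω _ => ?_
            rw [Finset.prod_mul_distrib, Finset.prod_ite_eq']
            simp [sq]
        _ = ∏ k, ∑ ω, (p k ω * (if k = i then Q k ω ^ 2 else 1)) :=
            sum_pi_prod (fun k ω => p k ω * (if k = i then Q k ω ^ 2 else 1))
        _ = a i * a i + (if i = i then D i else 0) := by
            have h : ∀ k, (∑ ω, p k ω * (if k = i then Q k ω ^ 2 else 1))
                = if k = i then (∑ ω, p k ω * Q k ω ^ 2) else 1 := by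
              intro k; by_cases h : k = i <;> simp [h, hs]
            rw [Finset.prod_congr rfl (fun k _ => h k), Finset.prod_ite_eq']
            simp [hD i]
            ring
    · calc ∑ ω : ∀ j, Ω j, (∏ k, p k (ω k)) * (Q i (ω i) * Q j (ω j))
          = ∑ ω : ∀ j, Ω j, ∏ k, (p k (ω k) *
              ((if k = i then Q k (ω k) else 1) * (if k = j then Q k (ω k) else 1))) := by
            refine Finset.sum_congr rfl fun ω _ => ?_
            rw [Finset.prod_mul_distrib, Finset.prod_mul_distrib,
              Finset.prod_ite_eq', Finset.prod_ite_eq']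
            simp
        _ = ∏ k, ∑ ω, (p k ω *
              ((if k = i then Q k ω else 1) * (if k = j then Q k ω else 1))) :=
            sum_pi_prod (fun k ω => p k ω *
              ((if k = i then Q k ω else 1) * (if k = j then Q k ω else 1)))
        _ = a i * a j + (if i = j then D i else 0) := by
            set f : Fin n → ℝ := fun k => ∑ ω, (p k ω *
              ((if k = i then Q k ω else 1) * (if k = j then Q k ω else 1))) with hf
            have hfi : f i = a i := by simp [hf, hij, hQ]
            have hfj : f j = a j := by simp [hf, hij.symm, hQ]
            have hother : ∀ k, k ≠ i → k ≠ j → f k = 1 := by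
              intro k h1 h2; simp [hf, h1, h2, hs]
            rw [prod_two_aux i j hij f hother, hfi, hfj, if_neg hij, add_zero]
  have main : ∀ i, ∑ ω : (∀ j, Ω j), (∏ j, p j (ω j)) *
        (Q i (ω i) * ((∑ j, Q j (ω j) * x j) - b))
      = a i * ((∑ j, a j * x j) - b) + D i * x i := by
    intro i
    have expand : ∀ ω : ∀ j, Ω j,
        (∏ j, p j (ω j)) * (Q i (ω i) * ((∑ j, Q j (ω j) * x j) - b))
        = (∑ j, ((∏ k, p k (ω k)) * (Q i (ω i) * Q j (ω j))) * x j)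
          - ((∏ j, p j (ω j)) * Q i (ω i)) * b := by
      intro ω
      rw [mul_sub, mul_sub, Finset.mul_sum, Finset.mul_sum]
      congr 1
      · exact Finset.sum_congr rfl fun j _ => by ring
      · ring
    calc ∑ ω : ∀ j, Ω j, (∏ j, p j (ω j)) * (Q i (ω i) * ((∑ j, Q j (ω j) * x j) - b))
        = (∑ ω : ∀ j, Ω j, ∑ j, ((∏ k, p k (ω k)) * (Q i (ω i) * Q j (ω j))) * x j)
          - ∑ ω : ∀ j, Ω j, ((∏ j, p j (ω j)) * Q i (ω i)) * b := by
          rw [← Finset.sum_sub_distrib]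
          exact Finset.sum_congr rfl fun ω _ => expand ω
      _ = (∑ j, (∑ ω : ∀ j, Ω j, (∏ k, p k (ω k)) * (Q i (ω i) * Q j (ω j))) * x j)
          - a i * b := by
          rw [Finset.sum_comm, ← Finset.sum_mul, T1]
          congr 1
          exact Finset.sum_congr rfl fun j _ => (Finset.sum_mul _ _ _).symm
      _ = a i * ((∑ j, a j * x j) - b) + D i * x i := by
          have : ∀ j ∈ Finset.univ, (∑ ω : ∀ j, Ω j, (∏ k, p k (ω k)) *
              (Q i (ω i) * Q j (ω j))) * x j
              = a i * (a j * x j) + (if i = j then D i * x i else 0) := by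
            intro j _
            rw [T2 i j]
            rcases eq_or_ne i j with rfl | h
            · simp; ring
            · simp [h]; ring
          rw [Finset.sum_congr rfl this, Finset.sum_add_distrib, ← Finset.mul_sum,
            Finset.sum_ite_eq Finset.univ i (fun _ => D i * x i)]
          simp
          ring
  refine ⟨main, ?_⟩
  rintro ⟨i, hDi, hxi⟩
  refine ⟨i, fun h => ?_⟩
  rw [main i, add_eq_left] at h
  exact (mul_ne_zero (ne_of_gt hDi) hxi) h
end

section
/- Let Q₁, Q₂ be independent random vectors in ℝⁿ each with expectation a and each with coordinatewise-independent components of variance at most M²/s². Suppose E[‖Q₁‖₂²] ≤ rM² for some r, M > 0 and ‖x‖₂ ≤ R. Then E[‖Q₁ (Q₂ᵀx + b)‖₂²] ≤ rM²((aᵀx + b)² + M²R²/s²). -/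
lemma aux_prod_exp5 {n : ℕ} {Ω : Fin n → Type} [∀ i, Fintype (Ω i)] (g : ∀ i, Ω i → ℝ) :
    ∑ ω : (∀ i, Ω i), ∏ i, g i (ω i) = ∏ i, ∑ ωi, g i ωi := by
  rw [Finset.prod_univ_sum, Fintype.piFinset_univ]

lemma aux_marg1 {n : ℕ} {Ω : Fin n → Type} [∀ i, Fintype (Ω i)]
    (p : ∀ i, Ω i → ℝ) (hs : ∀ i, ∑ ω, p i ω = 1) (j : Fin n) (f : Ω j → ℝ) :
    ∑ ω : (∀ i, Ω i), (∏ i, p i (ω i)) * f (ω j) = ∑ ωj, p j ωj * f ωj := by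
  classical
  set g : ∀ i, Ω i → ℝ := Function.update (fun i (_ : Ω i) => (1:ℝ)) j f with hg
  have hgj : g j = f := Function.update_self _ _ _
  have hgi : ∀ i, i ≠ j → g i = fun _ => (1:ℝ) := fun i hij => Function.update_of_ne hij _ _
  have h1 : ∀ ω : (∀ i, Ω i), (∏ i, p i (ω i)) * f (ω j)
      = ∏ i, (p i (ω i) * g i (ω i)) := by
    intro ω
    rw [Finset.prod_mul_distrib]
    congr 1
    rw [Finset.prod_eq_single j (fun i _ hij => by rw [hgi i hij]) (by simp)]
    rw [hgj]
  have h2 := aux_prod_exp5 (fun i ωi => p i ωi * g i ωi)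
  rw [Finset.sum_congr rfl (fun ω _ => h1 ω), h2]
  rw [Finset.prod_eq_single j (fun i _ hij => by simp [hgi i hij, hs i]) (by simp)]
  rw [hgj]

lemma aux_marg2 {n : ℕ} {Ω : Fin n → Type} [∀ i, Fintype (Ω i)]
    (p : ∀ i, Ω i → ℝ) (hs : ∀ i, ∑ ω, p i ω = 1) {j k : Fin n} (hjk : j ≠ k)
    (f : Ω j → ℝ) (f' : Ω k → ℝ) :
    ∑ ω : (∀ i, Ω i), (∏ i, p i (ω i)) * (f (ω j) * f' (ω k))
      = (∑ ωj, p j ωj * f ωj) * (∑ ωk, p k ωk * f' ωk) := by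
  classical
  set g : ∀ i, Ω i → ℝ :=
    Function.update (Function.update (fun i (_ : Ω i) => (1:ℝ)) j f) k f' with hg
  have hgk : g k = f' := Function.update_self _ _ _
  have hgj : g j = f := by
    rw [hg, Function.update_of_ne hjk, Function.update_self]
  have hgi : ∀ i, i ≠ j → i ≠ k → g i = fun _ => (1:ℝ) := by
    intro i hij hik
    rw [hg, Function.update_of_ne hik, Function.update_of_ne hij]
  have hpair : ∀ (F : Fin n → ℝ), (∀ i, i ≠ j → i ≠ k → F i = 1) →
      ∏ i, F i = F j * F k := by
    intro F hF
    rw [← Finset.prod_subset (Finset.subset_univ ({j, k} : Finset (Fin n)))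
      (by intro i _ hi
          simp only [Finset.mem_insert, Finset.mem_singleton, not_or] at hi
          exact hF i hi.1 hi.2)]
    exact Finset.prod_pair hjk
  have h1 : ∀ ω : (∀ i, Ω i), (∏ i, p i (ω i)) * (f (ω j) * f' (ω k))
      = ∏ i, (p i (ω i) * g i (ω i)) := by
    intro ω
    rw [Finset.prod_mul_distrib]
    congr 1
    rw [hpair (fun i => g i (ω i)) (fun i hij hik => by simp [hgi i hij hik])]
    simp [hgj, hgk]
  have h2 := aux_prod_exp5 (fun i ωi => p i ωi * g i ωi)
  rw [Finset.sum_congr rfl (fun ω _ => h1 ω), h2]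
  rw [hpair (fun i => ∑ ωi, p i ωi * g i ωi)
      (fun i hij hik => by simp [hgi i hij hik, hs i])]
  simp [hgj, hgk]

/-- Second moment bound for the double-sampling gradient estimator: if `Q₁, Q₂`
are independent unbiased quantizations of `a`, `Q₂` has coordinatewise
independent components of variance at most `M²/s²`, `E[‖Q₁‖₂²] ≤ rM²`, and
`‖x‖₂ ≤ R`, then `E[‖Q₁ (Q₂ᵀx + b)‖₂²] ≤ rM²((aᵀx + b)² + M²R²/s²)`. -/
theorem stmt5 {n : ℕ} {Ω₁ : Type} [Fintype Ω₁] {Ω : Fin n → Type}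
    [∀ i, Fintype (Ω i)]
    (p₁ : Ω₁ → ℝ) (hp₁ : ∀ ω, 0 ≤ p₁ ω) (hs₁ : ∑ ω, p₁ ω = 1)
    (p : ∀ i, Ω i → ℝ) (hp : ∀ i ω, 0 ≤ p i ω) (hs : ∀ i, ∑ ω, p i ω = 1)
    (Q₁ : Ω₁ → Fin n → ℝ) (Q₂ : ∀ i, Ω i → ℝ)
    (a x : Fin n → ℝ) (b r M s R : ℝ)
    (hM : 0 < M) (hr : 0 < r) (hsp : 0 < s) (hR : 0 ≤ R)
    (hE1 : ∀ i, ∑ ω, p₁ ω * Q₁ ω i = a i)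
    (hE2 : ∀ i, ∑ ω, p i ω * Q₂ i ω = a i)
    (hQ1sq : ∑ ω, p₁ ω * (∑ i, (Q₁ ω i) ^ 2) ≤ r * M ^ 2)
    (hVar : ∀ i, (∑ ω, p i ω * (Q₂ i ω) ^ 2) - (a i) ^ 2 ≤ M ^ 2 / s ^ 2)
    (hx : ∑ i, (x i) ^ 2 ≤ R ^ 2) :
    ∑ ω₁, ∑ ω : (∀ i, Ω i),
        p₁ ω₁ * (∏ i, p i (ω i)) *
          (∑ i, (Q₁ ω₁ i * ((∑ j, Q₂ j (ω j) * x j) + b)) ^ 2)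
      ≤ r * M ^ 2 * (((∑ i, a i * x i) + b) ^ 2 + M ^ 2 * R ^ 2 / s ^ 2) := by
  classical
  set μ : (∀ i, Ω i) → ℝ := fun ω => ∏ i, p i (ω i) with hμ
  set A : ℝ := ∑ i, a i * x i with hA
  set v : Fin n → ℝ := fun j => (∑ ω, p j ω * (Q₂ j ω) ^ 2) - (a j) ^ 2 with hv
  set T : (∀ i, Ω i) → ℝ := fun ω => (∑ j, Q₂ j (ω j) * x j) + b with hT
  -- total mass of product measure
  have hμ1 : ∑ ω : (∀ i, Ω i), μ ω = 1 := by
    rw [hμ]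
    rw [aux_prod_exp5 p]
    simp [hs]
  -- first marginal moments
  have hEc : ∀ j, ∑ ω : (∀ i, Ω i), μ ω * Q₂ j (ω j) = a j := by
    intro j
    rw [hμ, aux_marg1 p hs j (Q₂ j), hE2 j]
  have hEc2 : ∀ j, ∑ ω : (∀ i, Ω i), μ ω * (Q₂ j (ω j)) ^ 2 = (a j) ^ 2 + v j := by
    intro j
    rw [hμ, aux_marg1 p hs j (fun y => (Q₂ j y) ^ 2), hv]
    ring
  -- second moments for pairs
  have key : ∀ j k : Fin n, ∑ ω : (∀ i, Ω i),
      μ ω * (Q₂ j (ω j) * x j * (Q₂ k (ω k) * x k))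
      = (a j * x j) * (a k * x k) + (if j = k then (x j) ^ 2 * v j else 0) := by
    intro j k
    by_cases hjk : j = k
    · subst hjk
      have h1 : ∀ ω : (∀ i, Ω i), μ ω * (Q₂ j (ω j) * x j * (Q₂ j (ω j) * x j))
          = μ ω * (Q₂ j (ω j)) ^ 2 * (x j) ^ 2 := fun ω => by ring
      rw [Finset.sum_congr rfl fun ω _ => h1 ω, ← Finset.sum_mul, hEc2 j, if_pos rfl]
      ring
    · simp only [if_neg hjk]
      have h1 : ∀ ω : (∀ i, Ω i), μ ω * (Q₂ j (ω j) * x j * (Q₂ k (ω k) * x k))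
          = μ ω * (Q₂ j (ω j) * Q₂ k (ω k)) * (x j * x k) := fun ω => by ring
      rw [Finset.sum_congr rfl fun ω _ => h1 ω, ← Finset.sum_mul]
      rw [hμ, aux_marg2 p hs hjk (Q₂ j) (Q₂ k), hE2 j, hE2 k]
      ring
  -- expectation of T²
  have hS : ∑ ω : (∀ i, Ω i), μ ω * (T ω) ^ 2 = (A + b) ^ 2 + ∑ j, (x j) ^ 2 * v j := by
    have step1 : ∀ ω : (∀ i, Ω i), μ ω * (T ω) ^ 2
        = (∑ j, ∑ k, μ ω * (Q₂ j (ω j) * x j * (Q₂ k (ω k) * x k)))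
          + (∑ j, 2 * b * (μ ω * Q₂ j (ω j)) * x j) + μ ω * b ^ 2 := by
      intro ω
      have h2 : (∑ j, ∑ k, μ ω * (Q₂ j (ω j) * x j * (Q₂ k (ω k) * x k)))
          = μ ω * ((∑ j, Q₂ j (ω j) * x j) * (∑ k, Q₂ k (ω k) * x k)) := by
        rw [Finset.sum_mul_sum, Finset.mul_sum]
        exact Finset.sum_congr rfl fun j _ => by rw [Finset.mul_sum]
      have h3 : (∑ j, 2 * b * (μ ω * Q₂ j (ω j)) * x j)
          = 2 * b * μ ω * (∑ j, Q₂ j (ω j) * x j) := by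
        rw [Finset.mul_sum]
        exact Finset.sum_congr rfl fun j _ => by ring
      rw [h2, h3, hT]
      ring
    calc ∑ ω : (∀ i, Ω i), μ ω * (T ω) ^ 2
        = (∑ ω : (∀ i, Ω i), ∑ j, ∑ k, μ ω * (Q₂ j (ω j) * x j * (Q₂ k (ω k) * x k)))
          + (∑ ω : (∀ i, Ω i), ∑ j, 2 * b * (μ ω * Q₂ j (ω j)) * x j)
          + (∑ ω : (∀ i, Ω i), μ ω * b ^ 2) := by
          rw [Finset.sum_congr rfl fun ω _ => step1 ω, Finset.sum_add_distrib,
            Finset.sum_add_distrib]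
      _ = (∑ j, ∑ k, ∑ ω : (∀ i, Ω i), μ ω * (Q₂ j (ω j) * x j * (Q₂ k (ω k) * x k)))
          + (∑ j, 2 * b * (∑ ω : (∀ i, Ω i), μ ω * Q₂ j (ω j)) * x j)
          + (∑ ω : (∀ i, Ω i), μ ω) * b ^ 2 := by
          congr 1
          · congr 1
            · rw [Finset.sum_comm]
              exact Finset.sum_congr rfl fun j _ => Finset.sum_comm
            · rw [Finset.sum_comm]
              refine Finset.sum_congr rfl fun j _ => ?_
              rw [← Finset.sum_mul, ← Finset.mul_sum]
          · rw [Finset.sum_mul]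
      _ = (∑ j, ∑ k, ((a j * x j) * (a k * x k) + (if j = k then (x j) ^ 2 * v j else 0)))
          + (∑ j, 2 * b * (a j) * x j) + b ^ 2 := by
          rw [hμ1]
          congr 1
          · congr 1
            · exact Finset.sum_congr rfl fun j _ =>
                Finset.sum_congr rfl fun k _ => key j k
            · exact Finset.sum_congr rfl fun j _ => by rw [hEc j]
          · ring
      _ = (A + b) ^ 2 + ∑ j, (x j) ^ 2 * v j := by
          have h4 : ∀ j : Fin n, (∑ k, ((a j * x j) * (a k * x k)
              + (if j = k then (x j) ^ 2 * v j else 0)))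
              = (a j * x j) * A + (x j) ^ 2 * v j := by
            intro j
            rw [Finset.sum_add_distrib, ← Finset.mul_sum, Finset.sum_ite_eq]
            simp [hA]
          rw [Finset.sum_congr rfl fun j _ => h4 j, Finset.sum_add_distrib, ← Finset.sum_mul,
            ← hA]
          have h5 : (∑ j, 2 * b * a j * x j) = 2 * b * A := by
            rw [hA, Finset.mul_sum]
            exact Finset.sum_congr rfl fun j _ => by ring
          rw [h5]
          ring
  -- bound on the expectation of T²
  have hSle : ∑ ω : (∀ i, Ω i), μ ω * (T ω) ^ 2 ≤ (A + b) ^ 2 + M ^ 2 * R ^ 2 / s ^ 2 := by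
    rw [hS]
    have h6 : ∑ j, (x j) ^ 2 * v j ≤ M ^ 2 * R ^ 2 / s ^ 2 := by
      calc ∑ j, (x j) ^ 2 * v j ≤ ∑ j, (x j) ^ 2 * (M ^ 2 / s ^ 2) :=
            Finset.sum_le_sum fun j _ =>
              mul_le_mul_of_nonneg_left (hVar j) (sq_nonneg _)
        _ = (∑ j, (x j) ^ 2) * (M ^ 2 / s ^ 2) := by rw [Finset.sum_mul]
        _ ≤ R ^ 2 * (M ^ 2 / s ^ 2) := by
            apply mul_le_mul_of_nonneg_right hx
            positivity
        _ = M ^ 2 * R ^ 2 / s ^ 2 := by ring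
    linarith
  have hSnn : 0 ≤ ∑ ω : (∀ i, Ω i), μ ω * (T ω) ^ 2 :=
    Finset.sum_nonneg fun ω _ =>
      mul_nonneg (Finset.prod_nonneg fun i _ => hp i (ω i)) (sq_nonneg _)
  -- factor the left-hand side
  have hfac : ∑ ω₁, ∑ ω : (∀ i, Ω i),
      p₁ ω₁ * (∏ i, p i (ω i)) * (∑ i, (Q₁ ω₁ i * T ω) ^ 2)
      = (∑ ω₁, p₁ ω₁ * (∑ i, (Q₁ ω₁ i) ^ 2)) * (∑ ω : (∀ i, Ω i), μ ω * (T ω) ^ 2) := by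
    rw [Finset.sum_mul]
    refine Finset.sum_congr rfl fun ω₁ _ => ?_
    rw [Finset.mul_sum]
    refine Finset.sum_congr rfl fun ω _ => ?_
    have h7 : (∑ i, (Q₁ ω₁ i * T ω) ^ 2) = (∑ i, (Q₁ ω₁ i) ^ 2) * (T ω) ^ 2 := by
      rw [Finset.sum_mul]
      exact Finset.sum_congr rfl fun i _ => by ring
    rw [h7, hμ]
    ring
  calc ∑ ω₁, ∑ ω : (∀ i, Ω i),
        p₁ ω₁ * (∏ i, p i (ω i)) * (∑ i, (Q₁ ω₁ i * T ω) ^ 2)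
      = (∑ ω₁, p₁ ω₁ * (∑ i, (Q₁ ω₁ i) ^ 2)) * (∑ ω : (∀ i, Ω i), μ ω * (T ω) ^ 2) := hfac
    _ ≤ (r * M ^ 2) * ((A + b) ^ 2 + M ^ 2 * R ^ 2 / s ^ 2) := by
        apply mul_le_mul hQ1sq hSle hSnn
        positivity
end

section
/- Suppose Q₁, ..., Q_d are independent random vectors with E[(Qⱼᵀx)²] ≤ r · (aᵀx)² for all j, where r ≥ 1 and aᵀx ≥ 0, and the coefficients mᵢ ≥ 0. Then E[(Σᵢ₌₀^d mᵢ ∏_{j≤i} Qⱼᵀx)²] ≤ (Σᵢ₌₀^d mᵢ rⁱ (aᵀx)ⁱ)². -/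
lemma aux_main {Ω : Type*} [Fintype Ω] (w : Ω → ℝ) (hw : ∀ ω, 0 ≤ w ω)
    (N : Finset ℕ) (F : ℕ → Ω → ℝ) (m b : ℕ → ℝ) (hm : ∀ i ∈ N, 0 ≤ m i)
    (hb : ∀ i ∈ N, 0 ≤ b i)
    (hF2 : ∀ i ∈ N, ∑ ω, w ω * F i ω ^ 2 ≤ b i ^ 2) :
    ∑ ω, w ω * (∑ i ∈ N, m i * F i ω) ^ 2 ≤ (∑ i ∈ N, m i * b i) ^ 2 := by
  have key : ∀ i ∈ N, ∀ i' ∈ N, ∑ ω, w ω * (F i ω * F i' ω) ≤ b i * b i' := by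
    intro i hi i' hi'
    have hcs := Finset.sum_mul_sq_le_sq_mul_sq Finset.univ
      (fun ω => Real.sqrt (w ω) * F i ω) (fun ω => Real.sqrt (w ω) * F i' ω)
    have e1 : ∀ ω, (Real.sqrt (w ω) * F i ω) * (Real.sqrt (w ω) * F i' ω)
        = w ω * (F i ω * F i' ω) := by
      intro ω
      rw [show (Real.sqrt (w ω) * F i ω) * (Real.sqrt (w ω) * F i' ω)
          = (Real.sqrt (w ω) * Real.sqrt (w ω)) * (F i ω * F i' ω) by ring,
        Real.mul_self_sqrt (hw ω)]
    have e2 : ∀ (G : Ω → ℝ), ∀ ω, (Real.sqrt (w ω) * G ω) ^ 2 = w ω * G ω ^ 2 := by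
      intro G ω
      rw [mul_pow, Real.sq_sqrt (hw ω)]
    simp only [e1, e2] at hcs
    have h1 : (∑ ω, w ω * (F i ω * F i' ω)) ^ 2 ≤ (b i * b i') ^ 2 := by
      calc (∑ ω, w ω * (F i ω * F i' ω)) ^ 2
          ≤ (∑ ω, w ω * F i ω ^ 2) * ∑ ω, w ω * F i' ω ^ 2 := hcs
        _ ≤ b i ^ 2 * b i' ^ 2 := by
            apply mul_le_mul (hF2 i hi) (hF2 i' hi')
            · exact Finset.sum_nonneg fun ω _ => mul_nonneg (hw ω) (sq_nonneg _)
            · exact sq_nonneg _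
        _ = (b i * b i') ^ 2 := by ring
    nlinarith [mul_nonneg (hb i hi) (hb i' hi')]
  have expand : ∀ ω, w ω * (∑ i ∈ N, m i * F i ω) ^ 2
      = ∑ i ∈ N, ∑ i' ∈ N, m i * m i' * (w ω * (F i ω * F i' ω)) := by
    intro ω
    rw [sq, Finset.sum_mul_sum, Finset.mul_sum]
    refine Finset.sum_congr rfl fun i _ => ?_
    rw [Finset.mul_sum]
    exact Finset.sum_congr rfl fun i' _ => by ring
  calc ∑ ω, w ω * (∑ i ∈ N, m i * F i ω) ^ 2
      = ∑ i ∈ N, ∑ i' ∈ N, m i * m i' * ∑ ω, w ω * (F i ω * F i' ω) := by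
        simp_rw [expand]
        rw [Finset.sum_comm]
        refine Finset.sum_congr rfl fun i _ => ?_
        rw [Finset.sum_comm]
        exact Finset.sum_congr rfl fun i' _ => (Finset.mul_sum _ _ _).symm
    _ ≤ ∑ i ∈ N, ∑ i' ∈ N, m i * m i' * (b i * b i') := by
        refine Finset.sum_le_sum fun i hi => Finset.sum_le_sum fun i' hi' => ?_
        exact mul_le_mul_of_nonneg_left (key i hi i' hi')
          (mul_nonneg (hm i hi) (hm i' hi'))
    _ = (∑ i ∈ N, m i * b i) ^ 2 := by
        rw [sq, Finset.sum_mul_sum]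
        refine Finset.sum_congr rfl fun i _ => ?_
        exact Finset.sum_congr rfl fun i' _ => by ring

lemma aux_moment {n d : ℕ} {Ω : Fin d → Type} [∀ j, Fintype (Ω j)]
    (p : ∀ j, Ω j → ℝ)
    (hp : ∀ j ω, 0 ≤ p j ω) (hs : ∀ j, ∑ ω, p j ω = 1)
    (Q : ∀ j, Ω j → Fin n → ℝ) (a x : Fin n → ℝ) (r : ℝ)
    (hr : 1 ≤ r)
    (hsq : ∀ j, ∑ ω, p j ω * (∑ k, Q j ω k * x k) ^ 2
      ≤ r * (∑ k, a k * x k) ^ 2) (i : ℕ) (hi : i ≤ d) :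
    ∑ ω : (∀ j, Ω j), (∏ j, p j (ω j)) *
        (∏ j : Fin d, (if (j : ℕ) < i then ∑ k, Q j (ω j) k * x k else 1)) ^ 2
      ≤ (r ^ i * (∑ k, a k * x k) ^ i) ^ 2 := by
  classical
  set s := ∑ k, a k * x k with hsdef
  have hstep : ∑ ω : (∀ j, Ω j), (∏ j, p j (ω j)) *
        (∏ j : Fin d, (if (j : ℕ) < i then ∑ k, Q j (ω j) k * x k else 1)) ^ 2
      = ∏ j : Fin d, ∑ ωj : Ω j, p j ωj *
          (if (j : ℕ) < i then ∑ k, Q j ωj k * x k else 1) ^ 2 := by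
    rw [Fintype.prod_sum fun j ωj =>
      p j ωj * (if (j : ℕ) < i then ∑ k, Q j ωj k * x k else 1) ^ 2]
    refine Finset.sum_congr rfl fun ω _ => ?_
    rw [← Finset.prod_pow, ← Finset.prod_mul_distrib]
  rw [hstep]
  have hfac : ∏ j : Fin d, ∑ ωj : Ω j, p j ωj *
        (if (j : ℕ) < i then ∑ k, Q j ωj k * x k else 1) ^ 2
      ≤ ∏ j : Fin d, (if (j : ℕ) < i then r * s ^ 2 else 1) := by
    apply Finset.prod_le_prod
    · intro j _
      exact Finset.sum_nonneg fun ωj _ => mul_nonneg (hp j ωj) (sq_nonneg _)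
    · intro j _
      by_cases h : (j : ℕ) < i
      · simp only [h, if_true]
        exact hsq j
      · simp only [h, if_false, one_pow, mul_one]
        rw [hs j]
  have hprodc : ∏ j : Fin d, (if (j : ℕ) < i then r * s ^ 2 else 1)
      = (r * s ^ 2) ^ i := by
    rw [Fin.prod_univ_eq_prod_range (fun j => if j < i then r * s ^ 2 else 1) d,
      ← Finset.prod_filter]
    have he : (Finset.range d).filter (· < i) = Finset.range i := by
      ext j
      simp only [Finset.mem_filter, Finset.mem_range]
      omega
    rw [he, Finset.prod_const, Finset.card_range]
  calc _ ≤ _ := hfac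
    _ = (r * s ^ 2) ^ i := hprodc
    _ ≤ (r ^ i * s ^ i) ^ 2 := by
        have h1i : 1 ≤ r ^ i := one_le_pow₀ hr
        have h2 : (r * s ^ 2) ^ i = r ^ i * (s ^ i) ^ 2 := by
          rw [mul_pow, ← pow_mul, ← pow_mul, Nat.mul_comm]
        rw [h2, mul_pow]
        apply mul_le_mul_of_nonneg_right _ (sq_nonneg _)
        nlinarith [pow_nonneg (le_trans zero_le_one hr) i]

/-- Second moment of the polynomial estimator: if each independent quantization
satisfies `E[(Qⱼᵀx)²] ≤ r (aᵀx)²` with `r ≥ 1`, `aᵀx ≥ 0`, and `mᵢ ≥ 0`,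
then `E[(Σᵢ mᵢ ∏_{j≤i} Qⱼᵀx)²] ≤ (Σᵢ mᵢ rⁱ (aᵀx)ⁱ)²`. -/
theorem stmt9 {n d : ℕ} {Ω : Fin d → Type} [∀ j, Fintype (Ω j)]
    (p : ∀ j, Ω j → ℝ)
    (hp : ∀ j ω, 0 ≤ p j ω) (hs : ∀ j, ∑ ω, p j ω = 1)
    (Q : ∀ j, Ω j → Fin n → ℝ) (a x : Fin n → ℝ) (m : ℕ → ℝ) (r : ℝ)
    (hr : 1 ≤ r) (ha : 0 ≤ ∑ k, a k * x k) (hm : ∀ i, 0 ≤ m i)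
    (hsq : ∀ j, ∑ ω, p j ω * (∑ k, Q j ω k * x k) ^ 2
      ≤ r * (∑ k, a k * x k) ^ 2) :
    ∑ ω : (∀ j, Ω j), (∏ j, p j (ω j)) *
        (∑ i ∈ Finset.range (d + 1), m i *
          ∏ j : Fin d, (if (j : ℕ) < i then ∑ k, Q j (ω j) k * x k else 1)) ^ 2
      ≤ (∑ i ∈ Finset.range (d + 1), m i * r ^ i * (∑ k, a k * x k) ^ i) ^ 2 := by
  have hrhs : ∑ i ∈ Finset.range (d + 1), m i * r ^ i * (∑ k, a k * x k) ^ i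
      = ∑ i ∈ Finset.range (d + 1), m i * (r ^ i * (∑ k, a k * x k) ^ i) :=
    Finset.sum_congr rfl fun i _ => by ring
  rw [hrhs]
  apply aux_main (fun ω : (∀ j, Ω j) => ∏ j, p j (ω j))
    (fun ω => Finset.prod_nonneg fun j _ => hp j (ω j))
    (Finset.range (d + 1))
    (fun i ω => ∏ j : Fin d, (if (j : ℕ) < i then ∑ k, Q j (ω j) k * x k else 1))
    m (fun i => r ^ i * (∑ k, a k * x k) ^ i)
    (fun i _ => hm i)
    (fun i _ => mul_nonneg (pow_nonneg (le_trans zero_le_one hr) i) (pow_nonneg ha i))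
  intro i hi
  exact aux_moment p hp hs Q a x r hr hsq i (Nat.lt_succ_iff.mp (Finset.mem_range.mp hi))
end

section
/- There exists an optimal partition I* of [0,1] into s intervals minimizing the total quantization variance Σⱼ Σ_{xᵢ ∈ Iⱼ} err(xᵢ, Iⱼ), where err(x, [a,b]) = (b−x)(x−a), such that every endpoint of every interval of I* lies in Ω ∪ {0, 1}. -/
/-!
With the other endpoints fixed, the cost is affine in each endpoint `t j`, and every admissible
partition keeps `t j` between the largest data point (or 0) assigned to an interval left of it and
the smallest one (or 1) assigned to an interval right of it. Moving the endpoints one at a time to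
the end of this box that does not increase the cost gives a partition with endpoints in
`Ω ∪ {0, 1}`; moving right is only needed when the interval just right of `t j` contains a point,
which keeps the endpoints ordered. There are finitely many such partitions, and a cheapest one is
optimal.
-/

open Finset Function

theorem exists_pi_mem_le_of_forall_update_le {ι : Type*} [Fintype ι] [DecidableEq ι]
    {α : ι → Type*} {β : Type*} [Preorder β] (f : (∀ j, α j) → β) (S R : ∀ j, Set (α j))
    (h : ∀ u ∈ Set.univ.pi S, ∀ j, ∃ w ∈ S j, w ∈ R j ∧ f (update u j w) ≤ f u)
    {u : ∀ j, α j} (hu : u ∈ Set.univ.pi S) :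
    ∃ v ∈ Set.univ.pi S, (∀ j, v j ∈ R j) ∧ f v ≤ f u := by
  suffices key : ∀ T : Finset ι, ∀ u ∈ Set.univ.pi S, (∀ j ∉ T, u j ∈ R j) →
      ∃ v ∈ Set.univ.pi S, (∀ j, v j ∈ R j) ∧ f v ≤ f u from
    key univ u hu fun j hj => absurd (mem_univ j) hj
  intro T
  induction T using Finset.induction_on with
  | empty => exact fun u hu hR => ⟨u, hu, fun j => hR j (notMem_empty j), le_rfl⟩
  | insert a T _ ih =>
    intro u hu hR
    obtain ⟨w, hwS, hwR, hw⟩ := h u hu a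
    have hu' : update u a w ∈ Set.univ.pi S := by
      intro j _
      rcases eq_or_ne j a with rfl | hja
      · simpa using hwS
      · simpa [hja] using hu j trivial
    obtain ⟨v, hvS, hvR, hv⟩ := ih (update u a w) hu' fun j hj => by
      rcases eq_or_ne j a with rfl | hja
      · simpa using hwR
      · simpa [hja] using hR j (by simp [hja, hj])
    exact ⟨v, hvS, hvR, hv.trans hw⟩

namespace StochasticQuantization

variable {N s : ℕ} (x : Fin N → ℝ) (σ : Fin N → Fin s)

def cost (t : Fin (s + 1) → ℝ) : ℝ :=
  ∑ i, (t (σ i).succ - x i) * (x i - t (σ i).castSucc)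

def costSlope (t : Fin (s + 1) → ℝ) (j : Fin (s + 1)) : ℝ :=
  ∑ i, ((if (σ i).succ = j then x i - t (σ i).castSucc else 0) -
    (if (σ i).castSucc = j then t (σ i).succ - x i else 0))

structure IsAdmissible (t : Fin (s + 1) → ℝ) : Prop where
  monotone : Monotone t
  map_zero : t 0 = 0
  map_last : t (Fin.last s) = 1
  mem : ∀ i, t (σ i).castSucc ≤ x i ∧ x i ≤ t (σ i).succ

def IsSnapped (t : Fin (s + 1) → ℝ) : Prop :=
  ∀ j, t j = 0 ∨ t j = 1 ∨ ∃ i, t j = x i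

variable {x σ}

theorem cost_update (t : Fin (s + 1) → ℝ) (j : Fin (s + 1)) (v : ℝ) :
    cost x σ (update t j v) = cost x σ t + (v - t j) * costSlope x σ t j := by
  simp only [cost, costSlope, mul_sum, ← sum_add_distrib]
  refine sum_congr rfl fun i _ => ?_
  have hne : (σ i).castSucc ≠ (σ i).succ := Fin.castSucc_lt_succ.ne
  by_cases hr : (σ i).succ = j
  · subst hr
    rw [update_self, update_of_ne hne, if_pos rfl, if_neg hne]
    ring
  · by_cases hl : (σ i).castSucc = j
    · subst hl
      rw [update_self, update_of_ne hne.symm, if_neg hne.symm, if_pos rfl]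
      ring
    · simp [hr, hl]

theorem costSlope_nonneg {t : Fin (s + 1) → ℝ} {j : Fin (s + 1)}
    (hj : ∀ i, (σ i).castSucc ≠ j) (ht : ∀ i, t (σ i).castSucc ≤ x i) :
    0 ≤ costSlope x σ t j := by
  refine sum_nonneg fun i _ => ?_
  rw [if_neg (hj i), sub_zero]
  split_ifs
  · linarith [ht i]
  · rfl

theorem exists_update_cost_le {t : Fin (s + 1) → ℝ} {j : Fin (s + 1)} {a b : ℝ}
    (ha : a ≤ t j) (hb : t j ≤ b) (ht : ∀ i, t (σ i).castSucc ≤ x i) :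
    ∃ w, (w = a ∨ w = b ∧ ∃ i, (σ i).castSucc = j) ∧
      cost x σ (update t j w) ≤ cost x σ t := by
  by_cases hc : 0 ≤ costSlope x σ t j
  · refine ⟨a, Or.inl rfl, ?_⟩
    rw [cost_update]
    nlinarith
  · have hj : ∃ i, (σ i).castSucc = j := by
      by_contra! hj
      exact hc (costSlope_nonneg hj ht)
    refine ⟨b, Or.inr ⟨rfl, hj⟩, ?_⟩
    rw [cost_update]
    nlinarith

variable (x σ)

-- The `if`s shrink the box of the outer endpoints to `{0}` and `{1}`.
noncomputable def lowerBound (j : Fin (s + 1)) : ℝ :=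
  if j = Fin.last s then 1
  else (insert 0 ((univ.filter fun i => (σ i).succ ≤ j).image x)).max' (insert_nonempty _ _)

noncomputable def upperBound (j : Fin (s + 1)) : ℝ :=
  if j = 0 then 0
  else (insert 1 ((univ.filter fun i => j ≤ (σ i).castSucc).image x)).min' (insert_nonempty _ _)

variable {x σ}

theorem lowerBound_zero (hs : 0 < s) : lowerBound x σ 0 = 0 := by
  have h0 : (0 : Fin (s + 1)) ≠ Fin.last s := Fin.ext_iff.not.2 (by simp; omega)
  rw [lowerBound, if_neg h0]
  refine le_antisymm (max'_le _ _ _ fun y hy => ?_) (le_max' _ _ (mem_insert_self _ _))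
  exact (by simpa [Fin.succ_ne_zero] using hy : y = 0).le

theorem upperBound_zero : upperBound x σ 0 = 0 := if_pos rfl

theorem lowerBound_last : lowerBound x σ (Fin.last s) = 1 := if_pos rfl

theorem le_lowerBound (hx : ∀ i, x i ∈ Set.Icc (0 : ℝ) 1) {i : Fin N} {j : Fin (s + 1)}
    (hij : (σ i).succ ≤ j) : x i ≤ lowerBound x σ j := by
  unfold lowerBound
  split_ifs
  · exact (hx i).2
  · exact le_max' _ _ (mem_insert_of_mem (mem_image_of_mem x (by simpa using hij)))

theorem upperBound_le (hx : ∀ i, x i ∈ Set.Icc (0 : ℝ) 1) {i : Fin N} {j : Fin (s + 1)}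
    (hij : j ≤ (σ i).castSucc) : upperBound x σ j ≤ x i := by
  unfold upperBound
  split_ifs
  · exact (hx i).1
  · exact min'_le _ _ (mem_insert_of_mem (mem_image_of_mem x (by simpa using hij)))

theorem lowerBound_le_one (hx : ∀ i, x i ∈ Set.Icc (0 : ℝ) 1) (j : Fin (s + 1)) :
    lowerBound x σ j ≤ 1 := by
  unfold lowerBound
  split_ifs
  · rfl
  · refine max'_le _ _ _ fun y hy => ?_
    simp only [mem_insert, mem_image] at hy
    rcases hy with rfl | ⟨i, -, rfl⟩
    exacts [zero_le_one, (hx i).2]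

theorem monotone_lowerBound (hx : ∀ i, x i ∈ Set.Icc (0 : ℝ) 1) :
    Monotone (lowerBound x σ) := by
  intro j k hjk
  by_cases hk : k = Fin.last s
  · rw [hk, lowerBound_last]
    exact lowerBound_le_one hx j
  · have hj : j ≠ Fin.last s := fun hj => hk (Fin.last_le_iff.1 (hj ▸ hjk))
    rw [lowerBound, lowerBound, if_neg hj, if_neg hk]
    refine max'_subset _ (insert_subset_insert _ (image_subset_image fun i => ?_))
    simp only [mem_filter, mem_univ, true_and]
    exact fun hi => hi.trans hjk

theorem IsAdmissible.lowerBound_le {t : Fin (s + 1) → ℝ} (ht : IsAdmissible x σ t)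
    (j : Fin (s + 1)) : lowerBound x σ j ≤ t j := by
  unfold lowerBound
  split_ifs with hj
  · rw [hj, ht.map_last]
  · refine max'_le _ _ _ fun y hy => ?_
    simp only [mem_insert, mem_image, mem_filter, mem_univ, true_and] at hy
    rcases hy with rfl | ⟨i, hi, rfl⟩
    · exact ht.map_zero ▸ ht.monotone (Fin.zero_le j)
    · exact (ht.mem i).2.trans (ht.monotone hi)

theorem IsAdmissible.le_upperBound {t : Fin (s + 1) → ℝ} (ht : IsAdmissible x σ t)
    (j : Fin (s + 1)) : t j ≤ upperBound x σ j := by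
  unfold upperBound
  split_ifs with hj
  · rw [hj, ht.map_zero]
  · refine le_min' _ _ _ fun y hy => ?_
    simp only [mem_insert, mem_image, mem_filter, mem_univ, true_and] at hy
    rcases hy with rfl | ⟨i, hi, rfl⟩
    · exact ht.map_last ▸ ht.monotone (Fin.le_last j)
    · exact (ht.monotone hi).trans (ht.mem i).1

theorem lowerBound_mem (j : Fin (s + 1)) :
    lowerBound x σ j = 0 ∨ lowerBound x σ j = 1 ∨ ∃ i, lowerBound x σ j = x i := by
  unfold lowerBound
  split_ifs
  · exact Or.inr (Or.inl rfl)
  · have := max'_mem _ (insert_nonempty (0 : ℝ) ((univ.filter fun i => (σ i).succ ≤ j).image x))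
    simp only [mem_insert, mem_image] at this
    rcases this with h | ⟨i, -, h⟩
    exacts [Or.inl h, Or.inr (Or.inr ⟨i, h.symm⟩)]

theorem upperBound_mem (j : Fin (s + 1)) :
    upperBound x σ j = 0 ∨ upperBound x σ j = 1 ∨ ∃ i, upperBound x σ j = x i := by
  unfold upperBound
  split_ifs
  · exact Or.inl rfl
  · have := min'_mem _
      (insert_nonempty (1 : ℝ) ((univ.filter fun i => j ≤ (σ i).castSucc).image x))
    simp only [mem_insert, mem_image] at this
    rcases this with h | ⟨i, -, h⟩
    exacts [Or.inr (Or.inl h), Or.inr (Or.inr ⟨i, h.symm⟩)]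

theorem exists_isSnapped_cost_le (hs : 0 < s) (hx : ∀ i, x i ∈ Set.Icc (0 : ℝ) 1)
    {t' : Fin (s + 1) → ℝ} (ht' : IsAdmissible x σ t') :
    ∃ t, IsAdmissible x σ t ∧ IsSnapped x t ∧ cost x σ t ≤ cost x σ t' := by
  set box : ∀ _ : Fin (s + 1), Set ℝ := fun j => Set.Icc (lowerBound x σ j) (upperBound x σ j)
  set ends : ∀ _ : Fin (s + 1), Set ℝ := fun j =>
    {w | w = lowerBound x σ j ∨ w = upperBound x σ j ∧ ∃ i, (σ i).castSucc = j}
  have hstep : ∀ u ∈ Set.univ.pi box, ∀ j, ∃ w ∈ box j, w ∈ ends j ∧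
      cost x σ (update u j w) ≤ cost x σ u := by
    intro u hu j
    obtain ⟨hlo, hhi⟩ := hu j trivial
    obtain ⟨w, hw, hcost⟩ := exists_update_cost_le hlo hhi
      fun i => (hu _ trivial).2.trans (upperBound_le hx le_rfl)
    refine ⟨w, ?_, hw, hcost⟩
    rcases hw with rfl | ⟨rfl, -⟩
    exacts [⟨le_rfl, hlo.trans hhi⟩, ⟨hlo.trans hhi, le_rfl⟩]
  obtain ⟨t, ht, hends, hcost⟩ := exists_pi_mem_le_of_forall_update_le (cost x σ) box ends hstep
    fun j _ => ⟨ht'.lowerBound_le j, ht'.le_upperBound j⟩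
  have hlo (j) : lowerBound x σ j ≤ t j := (ht j trivial).1
  have hhi (j) : t j ≤ upperBound x σ j := (ht j trivial).2
  refine ⟨t, ⟨?_, ?_, ?_, fun i => ?_⟩, fun j => ?_, hcost⟩
  · refine Fin.monotone_iff_le_succ.2 fun j => ?_
    rcases hends j.castSucc with h | ⟨h, i, hi⟩
    · exact h ▸ (monotone_lowerBound hx (Fin.castSucc_le_succ j)).trans (hlo _)
    · calc t j.castSucc = upperBound x σ j.castSucc := h
        _ ≤ x i := upperBound_le hx hi.ge
        _ ≤ lowerBound x σ j.succ := le_lowerBound hx (by rw [Fin.castSucc_injective _ hi])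
        _ ≤ t j.succ := hlo _
  · exact le_antisymm ((hhi 0).trans_eq upperBound_zero)
      ((lowerBound_zero hs).symm.trans_le (hlo 0))
  · refine le_antisymm ?_ (lowerBound_last.symm.trans_le (hlo _))
    rcases hends (Fin.last s) with h | ⟨-, i, hi⟩
    · exact h ▸ lowerBound_le_one hx _
    · exact absurd hi (Fin.castSucc_lt_last _).ne
  · exact ⟨(hhi _).trans (upperBound_le hx le_rfl), (le_lowerBound hx le_rfl).trans (hlo _)⟩
  · rcases hends j with h | ⟨h, -⟩
    exacts [h ▸ lowerBound_mem j, h ▸ upperBound_mem j]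

theorem finite_setOf_isAdmissible_isSnapped (x : Fin N → ℝ) :
    {p : (Fin N → Fin s) × (Fin (s + 1) → ℝ) |
      IsAdmissible x p.1 p.2 ∧ IsSnapped x p.2}.Finite := by
  refine (Set.finite_univ.prod (Set.Finite.pi' fun _ =>
    ((Set.finite_range x).insert 1).insert 0)).subset fun p hp => ⟨trivial, fun j => ?_⟩
  rcases hp.2 j with h | h | ⟨i, h⟩ <;> simp [h]

theorem exists_isAdmissible_isSnapped (hs : 0 < s) (hx : ∀ i, x i ∈ Set.Icc (0 : ℝ) 1) :
    ∃ p : (Fin N → Fin s) × (Fin (s + 1) → ℝ), IsAdmissible x p.1 p.2 ∧ IsSnapped x p.2 := by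
  have hlast : Fin.last s ≠ 0 := Fin.ext_iff.not.2 (by simp; omega)
  refine ⟨(fun _ => ⟨0, hs⟩, fun j => if j = 0 then 0 else 1), ⟨fun j k hjk => ?_, by simp,
    by simp [hlast], fun i => ?_⟩, fun j => ?_⟩
  · dsimp only
    split_ifs with hj hk hk
    · rfl
    · exact zero_le_one
    · exact absurd (nonpos_iff_eq_zero.1 (hk ▸ hjk)) hj
    · rfl
  · simpa [Fin.succ_ne_zero] using hx i
  · by_cases hj : j = 0 <;> simp [hj]

end StochasticQuantization

open StochasticQuantization in
/-- There is an optimal partition of `[0,1]` into `s` intervals (given by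
monotone endpoints `t 0 = 0 ≤ t 1 ≤ ... ≤ t s = 1` together with an assignment
of each data point to an interval containing it) minimizing the total
quantization variance `Σᵢ (right − xᵢ)(xᵢ − left)`, all of whose endpoints lie
in `Ω ∪ {0, 1}`. -/
theorem stmt10 {N s : ℕ} (hs : 0 < s) (x : Fin N → ℝ)
    (hx : ∀ i, x i ∈ Set.Icc (0 : ℝ) 1) :
    ∃ (t : Fin (s + 1) → ℝ) (σ : Fin N → Fin s),
      Monotone t ∧ t 0 = 0 ∧ t (Fin.last s) = 1 ∧
      (∀ i, t (σ i).castSucc ≤ x i ∧ x i ≤ t (σ i).succ) ∧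
      (∀ j, t j = 0 ∨ t j = 1 ∨ ∃ i, t j = x i) ∧
      ∀ (t' : Fin (s + 1) → ℝ) (σ' : Fin N → Fin s),
        Monotone t' → t' 0 = 0 → t' (Fin.last s) = 1 →
        (∀ i, t' (σ' i).castSucc ≤ x i ∧ x i ≤ t' (σ' i).succ) →
        ∑ i, (t (σ i).succ - x i) * (x i - t (σ i).castSucc) ≤
          ∑ i, (t' (σ' i).succ - x i) * (x i - t' (σ' i).castSucc) := by
  obtain ⟨⟨σ, t⟩, ⟨ht, hsnap⟩, hmin⟩ := Set.exists_min_image _ (fun p => cost x p.1 p.2)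
    (finite_setOf_isAdmissible_isSnapped x) (exists_isAdmissible_isSnapped hs hx)
  refine ⟨t, σ, ht.monotone, ht.map_zero, ht.map_last, ht.mem, hsnap, ?_⟩
  intro t' σ' hmono h0 hlast hmem
  obtain ⟨t'', ht'', hsnap'', hcost⟩ :=
    exists_isSnapped_cost_le hs hx (⟨hmono, h0, hlast, hmem⟩ : IsAdmissible x σ' t')
  exact (hmin (σ', t'') ⟨ht'', hsnap''⟩).trans hcost
end

section
/- Let a₁,...,a_m ∈ ℝⁿ satisfy ‖aᵢ‖₂ ≤ 1 and be C-isotropic, let bᵢ ∈ {−1,1}, and let ‖x‖₂ ≤ R. If for each sample in the set S = {k : 1 − bₖaₖᵀx ∈ [−δ,δ]} the quantized gradient estimator may deviate from the true subgradient by a vector of norm at most 1, while for samples outside S the deviation of the conditional mean is at most ε, then the bias of the overall estimator satisfies ‖E[g] − ∇f(x)‖₂ ≤ ε + R²/(mC⁻¹(1−δ)²) — precisely, ≤ ε + |S|/m with |S| ≤ C‖x‖₂²/(1−δ)². -/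
/-!
The averaged deviation is at most the average of the per-sample deviations (triangle
inequality), i.e. at most `(|S| + (m - |S|) ε) / m ≤ ε + |S|/m`. For the size of `S`: on `S`
the margin satisfies `bₖ aₖᵀx ≥ 1 - δ ≥ 0`, so `(aₖᵀx)² ≥ (1 - δ)²` since `bₖ² = 1`; summing
over `S` and applying isotropy with `y = x` gives `|S| (1 - δ)² ≤ C ‖x‖²`.
-/

open Finset

section Deviation

variable {ι E : Type*} [Fintype ι] [SeminormedAddCommGroup E]

theorem norm_sum_le_card_add_card_compl_mul [DecidableEq ι] (S : Finset ι) (v : ι → E) {ε : ℝ}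
    (hout : ∀ k ∉ S, ‖v k‖ ≤ ε) (hin : ∀ k ∈ S, ‖v k‖ ≤ 1) :
    ‖∑ k, v k‖ ≤ #S + #Sᶜ * ε := by
  calc ‖∑ k, v k‖ ≤ ∑ k, ‖v k‖ := norm_sum_le _ _
    _ = ∑ k ∈ S, ‖v k‖ + ∑ k ∈ Sᶜ, ‖v k‖ := (sum_add_sum_compl S _).symm
    _ ≤ ∑ _k ∈ S, 1 + ∑ _k ∈ Sᶜ, ε := by
      gcongr with k hk k hk
      · exact hin k hk
      · exact hout k (mem_compl.mp hk)
    _ = #S + #Sᶜ * ε := by simp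

theorem norm_average_le_add_card_div [NormedSpace ℝ E] (S : Finset ι) (v : ι → E) {ε : ℝ}
    (hε : 0 ≤ ε) (hout : ∀ k ∉ S, ‖v k‖ ≤ ε) (hin : ∀ k ∈ S, ‖v k‖ ≤ 1) :
    ‖(Fintype.card ι : ℝ)⁻¹ • ∑ k, v k‖ ≤ ε + #S / Fintype.card ι := by
  classical
  have hcompl : (#Sᶜ : ℝ) ≤ Fintype.card ι := by exact_mod_cast card_le_univ Sᶜ
  set m : ℝ := (Fintype.card ι : ℝ)
  calc ‖m⁻¹ • ∑ k, v k‖ = m⁻¹ * ‖∑ k, v k‖ := by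
        rw [norm_smul, Real.norm_of_nonneg (by positivity)]
    _ ≤ m⁻¹ * (#S + m * ε) := by
      gcongr
      exact (norm_sum_le_card_add_card_compl_mul S v hout hin).trans (by gcongr)
    _ = (m⁻¹ * m) * ε + #S / m := by ring
    _ ≤ ε + #S / m := by gcongr; exact mul_le_of_le_one_left hε inv_mul_le_one

end Deviation

theorem one_sub_sq_le_sq_of_abs_one_sub_mul_le {b t δ : ℝ} (hb : b = 1 ∨ b = -1) (hδ1 : δ ≤ 1)
    (h : |1 - b * t| ≤ δ) : (1 - δ) ^ 2 ≤ t ^ 2 := by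
  have hmargin : 1 - δ ≤ b * t := by linarith [(abs_le.mp h).2]
  have hsq : (b * t) ^ 2 = t ^ 2 := by rcases hb with rfl | rfl <;> ring
  rw [← hsq]
  exact pow_le_pow_left₀ (by linarith) hmargin 2

theorem card_mul_le_of_le_sq {ι : Type*} [Fintype ι] (S : Finset ι) (t : ι → ℝ) {c B : ℝ}
    (hS : ∀ k ∈ S, c ≤ t k ^ 2) (hB : ∑ k, t k ^ 2 ≤ B) : #S * c ≤ B :=
  calc (#S : ℝ) * c = #S • c := (nsmul_eq_mul _ _).symm
    _ ≤ ∑ k ∈ S, t k ^ 2 := card_nsmul_le_sum S _ c hS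
    _ ≤ ∑ k, t k ^ 2 := sum_le_univ_sum_of_nonneg fun _ => sq_nonneg _
    _ ≤ B := hB

theorem sqrt_sum_sq_eq_norm_toLp {n : Type*} [Fintype n] (u : n → ℝ) :
    Real.sqrt (∑ i, u i ^ 2) = ‖WithLp.toLp 2 u‖ := by
  rw [← EuclideanSpace.real_norm_sq_eq, Real.sqrt_sq (norm_nonneg _)]

theorem stmt19_general {n m : ℕ} (a : Fin m → Fin n → ℝ)
    (bl : Fin m → ℝ) (x : Fin n → ℝ) (C δ ε : ℝ)
    (hδ1 : δ < 1) (hε : 0 ≤ ε)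
    (hbl : ∀ k, bl k = 1 ∨ bl k = -1)
    (hiso : ∀ y : Fin n → ℝ,
      ∑ k, (∑ i, a k i * y i) ^ 2 ≤ C * ∑ i, (y i) ^ 2)
    (G E : Fin m → Fin n → ℝ)
    (S : Finset (Fin m))
    (hS : S = Finset.univ.filter
      (fun k => |1 - bl k * ∑ i, a k i * x i| ≤ δ))
    (hout : ∀ k ∉ S, ∑ i, (E k i - G k i) ^ 2 ≤ ε ^ 2)
    (hin : ∀ k ∈ S, ∑ i, (E k i - G k i) ^ 2 ≤ 1) :
    Real.sqrt (∑ i, ((1 / m : ℝ) * ∑ k, E k i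
        - (1 / m : ℝ) * ∑ k, G k i) ^ 2)
      ≤ ε + (S.card : ℝ) / m ∧
    (S.card : ℝ) * (1 - δ) ^ 2 ≤ C * ∑ i, (x i) ^ 2 := by
  set v : Fin m → EuclideanSpace ℝ (Fin n) := fun k => WithLp.toLp 2 (E k - G k)
  have hv : ∀ k, ‖v k‖ = Real.sqrt (∑ i, (E k i - G k i) ^ 2) := fun k =>
    (sqrt_sum_sq_eq_norm_toLp _).symm
  have hbias : WithLp.toLp 2 (fun i => (1 / m : ℝ) * ∑ k, E k i - (1 / m : ℝ) * ∑ k, G k i)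
      = (m : ℝ)⁻¹ • ∑ k, v k := by
    ext i
    simp [v, sum_sub_distrib, mul_sub]
  have hdev_out : ∀ k ∉ S, ‖v k‖ ≤ ε := fun k hk => by
    rw [hv, ← Real.sqrt_sq hε]; exact Real.sqrt_le_sqrt (hout k hk)
  have hdev_in : ∀ k ∈ S, ‖v k‖ ≤ 1 := fun k hk => by
    rw [hv, ← Real.sqrt_one]; exact Real.sqrt_le_sqrt (hin k hk)
  constructor
  · have hbound := norm_average_le_add_card_div S v hε hdev_out hdev_in
    rwa [Fintype.card_fin, ← hbias, ← sqrt_sum_sq_eq_norm_toLp] at hbound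
  · refine card_mul_le_of_le_sq S (fun k => ∑ i, a k i * x i) (fun k hk => ?_) (hiso x)
    rw [hS, mem_filter] at hk
    exact one_sub_sq_le_sq_of_abs_one_sub_mul_le (hbl k) hδ1.le hk.2

/-- Bias bound for quantized SVM SGD under `C`-isotropy: with `‖aₖ‖₂ ≤ 1`,
`bₖ ∈ {−1,1}`, `‖x‖₂² ≤ R²`, `S = {k : 1 − bₖaₖᵀx ∈ [−δ,δ]}`, per-sample
conditional-mean deviation at most `ε` outside `S` and at most `1` on `S`,
the bias of the averaged estimator is at most `ε + |S|/m`, where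
`|S|(1−δ)² ≤ C‖x‖₂²`. -/
theorem stmt19 {n m : ℕ} (hm : 0 < m) (a : Fin m → Fin n → ℝ)
    (bl : Fin m → ℝ) (x : Fin n → ℝ) (C R δ ε : ℝ)
    (hδ : 0 ≤ δ) (hδ1 : δ < 1) (hε : 0 ≤ ε) (hC : 0 ≤ C)
    (ha : ∀ k, ∑ i, (a k i) ^ 2 ≤ 1)
    (hbl : ∀ k, bl k = 1 ∨ bl k = -1)
    (hiso : ∀ y : Fin n → ℝ,
      ∑ k, (∑ i, a k i * y i) ^ 2 ≤ C * ∑ i, (y i) ^ 2)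
    (hx : ∑ i, (x i) ^ 2 ≤ R ^ 2)
    (G E : Fin m → Fin n → ℝ)
    (S : Finset (Fin m))
    (hS : S = Finset.univ.filter
      (fun k => |1 - bl k * ∑ i, a k i * x i| ≤ δ))
    (hout : ∀ k ∉ S, ∑ i, (E k i - G k i) ^ 2 ≤ ε ^ 2)
    (hin : ∀ k ∈ S, ∑ i, (E k i - G k i) ^ 2 ≤ 1) :
    Real.sqrt (∑ i, ((1 / m : ℝ) * ∑ k, E k i
        - (1 / m : ℝ) * ∑ k, G k i) ^ 2)
      ≤ ε + (S.card : ℝ) / m ∧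
    (S.card : ℝ) * (1 - δ) ^ 2 ≤ C * ∑ i, (x i) ^ 2 :=
  stmt19_general a bl x C δ ε hδ1 hε hbl hiso G E S hS hout hin
end
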